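/- For every semantically deterministic nondeterministic weak automaton A with n states, there exists a deterministic weak automaton with at most n states recognizing the complement Σ^ω \ L(A), constructible in polynomial time. -/
import Mathlib


open Filter

variable {A Q : Type}

/-- Extension of a transition function to sets of states and finite words. -/
def extSet (δ : Q → A → Set Q) : Set Q → List A → Set Q
  | S, [] => S
  | S, a :: u => extSet δ (⋃ q ∈ S, δ q a) u

/-- A (state-based) nondeterministic Büchi automaton with a single initial
state and a total transition function. -/
structure NBW (A Q : Type) where
  q0 : Q
  δ : Q → A → Set Q
  α : Set Q
  δ_nonempty : ∀ q a, (δ q a).Nonempty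

namespace NBW

/-- `L(A^q)`: words having a run from `q` visiting `α` infinitely often. -/
def LangFrom (M : NBW A Q) (q : Q) : Set (ℕ → A) :=
  {w | ∃ r : ℕ → Q, r 0 = q ∧ (∀ i, r (i + 1) ∈ M.δ (r i) (w i)) ∧
    ∃ᶠ i in atTop, r i ∈ M.α}

def Lang (M : NBW A Q) : Set (ℕ → A) := M.LangFrom M.q0

/-- `q'` is reachable from `q`. -/
def Reach (M : NBW A Q) (q q' : Q) : Prop :=
  ∃ u : List A, q' ∈ extSet M.δ {q} u

/-- The automaton is weak: every strongly connected component is contained in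
`α` or disjoint from `α`, i.e. mutually reachable states agree on `α`. -/
def Weak (M : NBW A Q) : Prop :=
  ∀ q q', M.Reach q q' → M.Reach q' q → (q ∈ M.α ↔ q' ∈ M.α)

/-- Semantic determinism: all σ-successors of any state are
language-equivalent. -/
def SD (M : NBW A Q) : Prop :=
  ∀ q a, ∀ q₁ ∈ M.δ q a, ∀ q₂ ∈ M.δ q a, M.LangFrom q₁ = M.LangFrom q₂

end NBW

/-- A (state-based) deterministic Büchi automaton. -/
structure DBW (A Q : Type) where
  q0 : Q
  δ : Q → A → Q
  α : Set Q

namespace DBW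

def run (D : DBW A Q) (w : ℕ → A) : ℕ → Q
  | 0 => D.q0
  | i + 1 => D.δ (D.run w i) (w i)

def Lang (D : DBW A Q) : Set (ℕ → A) :=
  {w | ∃ᶠ i in atTop, D.run w i ∈ D.α}

def Reach (D : DBW A Q) (q q' : Q) : Prop :=
  ∃ u : List A, List.foldl D.δ q u = q'

/-- The deterministic automaton is weak. -/
def Weak (D : DBW A Q) : Prop :=
  ∀ q q', D.Reach q q' → D.Reach q' q → (q ∈ D.α ↔ q' ∈ D.α)

end DBW

section Aux

attribute [local instance] Classical.propDecidable

namespace SDAux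

variable {A Q : Type}

/-- Shifted suffix of an infinite word. -/
def wsh (w : ℕ → A) (i : ℕ) : ℕ → A := fun n => w (i + n)

/-- Prepending a letter to an infinite word. -/
def wcons (a : A) (v : ℕ → A) : ℕ → A := fun n => Nat.casesOn n a v

lemma wsh_zero (w : ℕ → A) : wsh w 0 = w := by
  funext n; simp [wsh]

lemma wcons_wsh (w : ℕ → A) (i : ℕ) : wcons (w i) (wsh w (i + 1)) = wsh w i := by
  funext n
  cases n with
  | zero => show w i = w (i + 0); simp
  | succ m => show w (i + 1 + m) = w (i + (m + 1)); congr 1; omega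

lemma extSet_mono (δ : Q → A → Set Q) :
    ∀ (u : List A) {S T : Set Q}, S ⊆ T → extSet δ S u ⊆ extSet δ T u := by
  intro u
  induction u with
  | nil => intro S T h; exact h
  | cons a u ih =>
    intro S T h
    exact ih (Set.biUnion_subset_biUnion_left h)

lemma extSet_append (δ : Q → A → Set Q) :
    ∀ (u v : List A) (S : Set Q), extSet δ S (u ++ v) = extSet δ (extSet δ S u) v := by
  intro u
  induction u with
  | nil => intro v S; rfl
  | cons a u ih => intro v S; exact ih v _

variable (M : NBW A Q)

lemma reach_refl (q : Q) : M.Reach q q := ⟨[], rfl⟩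

lemma reach_step {q q' : Q} {a : A} (h : q' ∈ M.δ q a) : M.Reach q q' := by
  refine ⟨[a], ?_⟩
  show q' ∈ extSet M.δ (⋃ p ∈ ({q} : Set Q), M.δ p a) []
  simpa [extSet] using h

lemma reach_trans {q q' q'' : Q} (h1 : M.Reach q q') (h2 : M.Reach q' q'') :
    M.Reach q q'' := by
  obtain ⟨u, hu⟩ := h1
  obtain ⟨v, hv⟩ := h2
  refine ⟨u ++ v, ?_⟩
  rw [extSet_append]
  exact extSet_mono M.δ v (by simpa using hu) hv

/-- `altCh M k q` : there is a chain of `k` strict `α`-alternations starting at `q`. -/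
def altCh : ℕ → Q → Prop
  | 0, _ => True
  | (k+1), q => ∃ q', M.Reach q q' ∧ ¬(q ∈ M.α ↔ q' ∈ M.α) ∧ altCh k q'

lemma altCh_chain {k : ℕ} :
    ∀ {q : Q}, altCh M k q → ∃ l : List Q,
      List.Chain (fun x y => M.Reach x y ∧ ¬(x ∈ M.α ↔ y ∈ M.α)) q l ∧ l.length = k := by
  induction k with
  | zero => intro q _; exact ⟨[], List.Chain.nil, rfl⟩
  | succ k ih =>
    intro q hq
    obtain ⟨q', hr, ha, hc⟩ := hq
    obtain ⟨l, hl, hlen⟩ := ih hc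
    exact ⟨q' :: l, List.Chain.cons ⟨hr, ha⟩ hl, by simp [hlen]⟩

lemma altCh_le_card [Fintype Q] (hweak : M.Weak) {k : ℕ} {q : Q}
    (h : altCh M k q) : k ≤ Fintype.card Q := by
  obtain ⟨l, hl, hlen⟩ := altCh_chain M h
  set R : Q → Q → Prop := fun x y => M.Reach x y ∧ ¬ M.Reach y x with hR
  have htrans : Transitive R := by
    intro a b c hab hbc
    refine ⟨reach_trans M hab.1 hbc.1, fun hca => ?_⟩
    exact hbc.2 (reach_trans M hca hab.1)
  have hl' : List.Chain R q l := by
    refine List.Chain.imp ?_ hl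
    intro a b hab
    refine ⟨hab.1, fun hba => hab.2 (hweak a b hab.1 hba)⟩
    
  have hpw : List.Pairwise R (q :: l) := by
    haveI : IsTrans Q R := ⟨fun a b c hab hbc => htrans hab hbc⟩
    exact List.isChain_iff_pairwise.mp hl'
  have hnd : (q :: l).Nodup := by
    refine hpw.imp ?_
    intro a b hab hEq
    exact hab.2 (hEq ▸ reach_refl M a)
  have := hnd.length_le_card
  simp at this
  omega

variable [Fintype Q]

/-- Maximal number of `α`-alternations reachable from `q`. -/
noncomputable def hgt (q : Q) : ℕ := Nat.findGreatest (fun k => altCh M k q) (Fintype.card Q)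

lemma altCh_hgt (q : Q) : altCh M (hgt M q) q :=
  Nat.findGreatest_spec (P := fun k => altCh M k q) (Nat.zero_le _) trivial

lemma le_hgt (hweak : M.Weak) {k : ℕ} {q : Q} (h : altCh M k q) : k ≤ hgt M q :=
  Nat.le_findGreatest (altCh_le_card M hweak h) h

/-- Rank of a state: twice the alternation height plus an `α`-parity bit. -/
noncomputable def rank (q : Q) : ℕ := 2 * hgt M q + (if q ∈ M.α then 0 else 1)

lemma rank_mono (hweak : M.Weak) {q q' : Q} (h : M.Reach q q') :
    rank M q' ≤ rank M q := by
  by_cases hiff : (q ∈ M.α ↔ q' ∈ M.α)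
  · have hle : hgt M q' ≤ hgt M q := by
      refine le_hgt M hweak ?_
      have := altCh_hgt M q'
      cases hk : hgt M q' with
      | zero => trivial
      | succ k =>
        rw [hk] at this
        obtain ⟨q'', hr, ha, hc⟩ := this
        exact ⟨q'', reach_trans M h hr, fun hi => ha (hiff.symm.trans hi), hc⟩
    unfold rank
    by_cases h1 : q ∈ M.α <;> by_cases h2 : q' ∈ M.α <;> simp [h1, h2] at hiff ⊢ <;> omega
  · have hlt : hgt M q' + 1 ≤ hgt M q :=
      le_hgt M hweak ⟨q', h, hiff, altCh_hgt M q'⟩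
    unfold rank
    by_cases h1 : q ∈ M.α <;> by_cases h2 : q' ∈ M.α <;> simp [h1, h2] <;> omega

lemma mem_alpha_of_rank_eq {q q' : Q} (h : rank M q = rank M q') :
    q ∈ M.α ↔ q' ∈ M.α := by
  unfold rank at h
  by_cases h1 : q ∈ M.α <;> by_cases h2 : q' ∈ M.α <;> simp [h1, h2] at h ⊢ <;> omega

/-- Key one-letter language lemma for semantically deterministic automata. -/
lemma lang_cons (hSD : M.SD) {q p : Q} {a : A} (hp : p ∈ M.δ q a) (v : ℕ → A) :
    v ∈ M.LangFrom p ↔ wcons a v ∈ M.LangFrom q := by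
  constructor
  · rintro ⟨s, hs0, hs, hsf⟩
    refine ⟨fun n => Nat.casesOn n q s, rfl, ?_, ?_⟩
    · intro i
      cases i with
      | zero => simpa [wcons, hs0] using hp
      | succ j => exact hs j
    · rw [Filter.frequently_atTop] at hsf ⊢
      intro N
      obtain ⟨n, hn, hmem⟩ := hsf N
      exact ⟨n + 1, by omega, hmem⟩
  · rintro ⟨s, hs0, hs, hsf⟩
    have h1 : s 1 ∈ M.δ q a := by
      have := hs 0
      rwa [hs0] at this
    have hv : v ∈ M.LangFrom (s 1) := by
      refine ⟨fun n => s (n + 1), rfl, fun i => hs (i + 1), ?_⟩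
      rw [Filter.frequently_atTop] at hsf ⊢
      intro N
      obtain ⟨n, hn, hmem⟩ := hsf (N + 1)
      refine ⟨n - 1, by omega, ?_⟩
      show s (n - 1 + 1) ∈ M.α
      have h' : n - 1 + 1 = n := by omega
      rw [h']; exact hmem
    rwa [hSD q a (s 1) h1 p hp] at hv

/-- An arbitrary successor. -/
noncomputable def pick (q : Q) (a : A) : Q := (M.δ_nonempty q a).some

lemma pick_mem (q : Q) (a : A) : pick M q a ∈ M.δ q a := (M.δ_nonempty q a).some_mem

lemma exists_rep (q : Q) (a : A) :
    ∃ p, M.LangFrom p = M.LangFrom (pick M q a) ∧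
      ∀ p', M.LangFrom p' = M.LangFrom (pick M q a) → rank M p ≤ rank M p' := by
  obtain ⟨b, hb, hmin⟩ := Finset.exists_min_image
    (Finset.univ.filter (fun p => M.LangFrom p = M.LangFrom (pick M q a))) (rank M)
    ⟨pick M q a, by simp⟩
  simp only [Finset.mem_filter, Finset.mem_univ, true_and] at hb hmin
  exact ⟨b, hb, fun p' hp' => hmin p' (by simp [hp'])⟩

/-- Minimal-rank representative of the successor language class. -/
noncomputable def rep (q : Q) (a : A) : Q := Classical.choose (exists_rep M q a)

lemma rep_lang (q : Q) (a : A) :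
    M.LangFrom (rep M q a) = M.LangFrom (pick M q a) :=
  (Classical.choose_spec (exists_rep M q a)).1

lemma rep_min {q : Q} {a : A} {p : Q} (h : M.LangFrom p = M.LangFrom (pick M q a)) :
    rank M (rep M q a) ≤ rank M p :=
  (Classical.choose_spec (exists_rep M q a)).2 p h

lemma rep_rank_le (hweak : M.Weak) (q : Q) (a : A) : rank M (rep M q a) ≤ rank M q :=
  le_trans (rep_min M rfl) (rank_mono M hweak (reach_step M (pick_mem M q a)))

/-- The complement deterministic automaton. -/
noncomputable def Dm : DBW A Q := ⟨M.q0, fun q a => rep M q a, M.αᶜ⟩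

end SDAux

end Aux


section MainAux

namespace SDAux

variable {A Q : Type} [Fintype Q] (M : NBW A Q)

lemma exists_stab (f : ℕ → ℕ) (hf : Antitone f) : ∃ N, ∀ i ≥ N, f i = f N := by
  obtain ⟨N, hN⟩ := Nat.sInf_mem (⟨f 0, 0, rfl⟩ : (Set.range f).Nonempty)
  refine ⟨N, fun i hi => ?_⟩
  have h1 : f i ≤ f N := hf hi
  have h2 : sInf (Set.range f) ≤ f i := Nat.sInf_le ⟨i, rfl⟩
  omega

lemma inv (hSD : M.SD) (w : ℕ → A) :
    ∀ i, (wsh w i ∈ M.LangFrom ((Dm M).run w i)) ↔ w ∈ M.Lang := by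
  intro i
  induction i with
  | zero => rw [wsh_zero]; exact Iff.rfl
  | succ i ih =>
    rw [← ih]
    have e1 : M.LangFrom ((Dm M).run w (i + 1)) =
        M.LangFrom (pick M ((Dm M).run w i) (w i)) := rep_lang M _ _
    rw [e1, lang_cons M hSD (pick_mem M ((Dm M).run w i) (w i)) (wsh w (i + 1)),
      wcons_wsh]

lemma keyC (hweak : M.Weak) (hSD : M.SD) (w : ℕ → A) (N i0 : ℕ) (hi0 : N ≤ i0)
    (hstab : ∀ k ≥ N, rank M ((Dm M).run w k) = rank M ((Dm M).run w N))
    (s : ℕ → Q) (hs0 : s 0 = (Dm M).run w i0)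
    (hs : ∀ j, s (j + 1) ∈ M.δ (s j) (w (i0 + j))) :
    ∀ j, M.LangFrom (s j) = M.LangFrom ((Dm M).run w (i0 + j)) ∧
      rank M (s j) = rank M ((Dm M).run w N) := by
  intro j
  induction j with
  | zero => exact ⟨by rw [Nat.add_zero, hs0], by rw [hs0]; exact hstab i0 hi0⟩
  | succ j ih =>
    have e1 : M.LangFrom ((Dm M).run w (i0 + (j + 1))) =
        M.LangFrom (pick M ((Dm M).run w (i0 + j)) (w (i0 + j))) := rep_lang M _ _
    have hlang : M.LangFrom (s (j + 1)) = M.LangFrom ((Dm M).run w (i0 + (j + 1))) := by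
      ext v
      rw [lang_cons M hSD (hs j) v, ih.1,
        ← lang_cons M hSD (pick_mem M ((Dm M).run w (i0 + j)) (w (i0 + j))) v, ← e1]
    have hr1 : rank M ((Dm M).run w (i0 + (j + 1))) ≤ rank M (s (j + 1)) :=
      rep_min M (q := (Dm M).run w (i0 + j)) (a := w (i0 + j)) (by rw [hlang, e1])
    have hr2 : rank M (s (j + 1)) ≤ rank M (s j) :=
      rank_mono M hweak (reach_step M (hs j))
    have hst1 := hstab (i0 + (j + 1)) (by omega)
    have hst2 := ih.2
    exact ⟨hlang, by omega⟩

end SDAux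

end MainAux

/-- Every semantically deterministic nondeterministic weak automaton with `n`
states has a deterministic weak automaton with at most `n` states recognizing
its complement. -/
theorem sd_nww_complementation [Fintype Q] (M : NBW A Q)
    (hweak : M.Weak) (hSD : M.SD) :
    ∃ (Q' : Type) (_ : Fintype Q') (D : DBW A Q'),
      Fintype.card Q' ≤ Fintype.card Q ∧ D.Weak ∧
      D.Lang = {w | w ∉ M.Lang} := by
  classical
  refine ⟨Q, inferInstance, SDAux.Dm M, le_refl _, ?_, ?_⟩
  · -- weakness of the complement automaton
    have hrank : ∀ q q', (SDAux.Dm M).Reach q q' → SDAux.rank M q' ≤ SDAux.rank M q := by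
      rintro q q' ⟨u, hu⟩
      induction u generalizing q with
      | nil => exact hu ▸ le_refl _
      | cons a u ih =>
        simp only [List.foldl_cons] at hu
        exact le_trans (ih _ hu) (SDAux.rep_rank_le M hweak q a)
    intro q q' h1 h2
    have hiff := SDAux.mem_alpha_of_rank_eq M
      (le_antisymm (hrank q' q h2) (hrank q q' h1))
    show q ∈ M.αᶜ ↔ q' ∈ M.αᶜ
    simp [hiff]
  · -- the language is the complement
    ext w
    simp only [DBW.Lang, Set.mem_setOf_eq]
    have hanti : Antitone (fun i => SDAux.rank M ((SDAux.Dm M).run w i)) :=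
      antitone_nat_of_succ_le (fun i => SDAux.rep_rank_le M hweak _ _)
    obtain ⟨N, hstab⟩ := SDAux.exists_stab (fun i => SDAux.rank M ((SDAux.Dm M).run w i)) hanti
    constructor
    · intro hfreq hlang
      have hmem : SDAux.wsh w N ∈ M.LangFrom ((SDAux.Dm M).run w N) :=
        (SDAux.inv M hSD w N).mpr hlang
      obtain ⟨s, hs0, hs, hsf⟩ := hmem
      have hC := SDAux.keyC M hweak hSD w N N (le_refl N) hstab s hs0 hs
      obtain ⟨j0, hj0⟩ := hsf.exists
      obtain ⟨i, hiN, hic⟩ := Filter.frequently_atTop.mp hfreq N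
      have h1 := (hC j0).2
      have h2 := hstab i hiN
      have hiff := SDAux.mem_alpha_of_rank_eq M (h1.trans h2.symm)
      exact hic (hiff.mp hj0)
    · intro hnot
      by_contra hnf
      rw [Filter.not_frequently] at hnf
      obtain ⟨N', hN'⟩ := Filter.eventually_atTop.mp hnf
      set i0 := max N N' with hi0def
      let t : ℕ → Q := fun j => Nat.rec ((SDAux.Dm M).run w i0)
        (fun j tj => SDAux.pick M tj (w (i0 + j))) j
      have ht : ∀ j, t (j + 1) ∈ M.δ (t j) (w (i0 + j)) :=
        fun j => SDAux.pick_mem M _ _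
      have hC := SDAux.keyC M hweak hSD w N i0 (le_max_left N N') hstab t rfl ht
      have htα : ∀ j, t j ∈ M.α := by
        intro j
        have h1 := (hC j).2
        have h2 := hstab (i0 + j) (le_trans (le_max_left N N') (Nat.le_add_right i0 j))
        have hiff := SDAux.mem_alpha_of_rank_eq M (h1.trans h2.symm)
        have hα : (SDAux.Dm M).run w (i0 + j) ∈ M.α := by
          have := hN' (i0 + j) (le_trans (le_max_right N N') (Nat.le_add_right i0 j))
          simpa [SDAux.Dm] using this
        exact hiff.mpr hα
      have hmem : SDAux.wsh w i0 ∈ M.LangFrom ((SDAux.Dm M).run w i0) :=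
        ⟨t, rfl, ht, Filter.Eventually.frequently (Filter.Eventually.of_forall htα)⟩
      exact hnot ((SDAux.inv M hSD w i0).mp hmem)
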